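/- (Equation (16)) For every integer n ≥ 0, the fermionic p-adic q-integral of x ↦ [1−x]_{1/q}^n exists and ∫_{ℤ_p} [1−x]_{1/q}^n dμ_{−q}(x) = ξ_{n,1/q}(2), where ξ_{n,1/q} denotes the q-Euler polynomial with parameter 1/q in place of q. -/

import Mathlib

open Finset Filter

/-- `[a]_q = (1 - q^a)/(1 - q)` for `a : ℤ`. -/
noncomputable def qnum {p : ℕ} [Fact p.Prime] (q : ℚ_[p]) (a : ℤ) : ℚ_[p] :=
  (1 - q ^ a) / (1 - q)

/-- Kim's q-Euler polynomial `ξ_{n,q}(x)` (closed form). -/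
noncomputable def xi {p : ℕ} [Fact p.Prime] (q : ℚ_[p]) (n : ℕ) (x : ℤ) : ℚ_[p] :=
  ((1 + q) / (1 - q) ^ n) *
    ∑ l ∈ Finset.range (n + 1),
      (n.choose l : ℚ_[p]) * (-1) ^ l * q ^ ((l : ℤ) * x) / (1 + q ^ (l + 1))

/-- The fermionic p-adic `r`-integral statement:
`∫_{ℤ_p} g dμ_{-r} = L` means the Riemann-type sums
`(1/[p^N]_{-r}) · Σ_{x=0}^{p^N-1} g(x) (-r)^x` converge to `L`. -/
def fermionicIntegral (p : ℕ) [Fact p.Prime] (r : ℚ_[p]) (g : ℕ → ℚ_[p]) (L : ℚ_[p]) : Prop :=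
  Filter.Tendsto
    (fun N : ℕ => ((1 + r) / (1 - (-r) ^ (p ^ N))) * ∑ x ∈ Finset.range (p ^ N), g x * (-r) ^ x)
    Filter.atTop (nhds L)

/-- The q-Bernstein polynomial `B_{k,n}(x,q) = C(n,k) [x]_q^k [1-x]_{1/q}^{n-k}`. -/
noncomputable def bern {p : ℕ} [Fact p.Prime] (q : ℚ_[p]) (k n : ℕ) (x : ℤ) : ℚ_[p] :=
  (n.choose k : ℚ_[p]) * (qnum q x) ^ k * (qnum q⁻¹ (1 - x)) ^ (n - k)

/-! Since `[1-x]_{1/q} = (q - q^x)/(q - 1)`, the binomial theorem writes the integrand as a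
linear combination of the characters `x ↦ (q^l)^x`. As `p^N` is odd, the Riemann sums of a
character `a^x` for `μ_{-r}` are geometric, equal to
`(1 + r)/(1 + r^{p^N}) · (1 + (ar)^{p^N})/(1 + ar)`; and `r^{p^N} → 1` when `|1 - r|_p < 1`,
because `p^{N+1} ∣ r^{p^N} - 1` in `ℤ_p`. Hence `∫ a^x dμ_{-r} = (1 + r)/(1 + ar)`, and summing
these values gives the closed form of `ξ_{n,1/q}(2)`. -/

namespace Padic

variable {p : ℕ} [Fact p.Prime] {q : ℚ_[p]}

lemma exists_padicInt_dvd_sub_one (hq : ‖1 - q‖ < 1) :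
    ∃ z : ℤ_[p], (z : ℚ_[p]) = q ∧ (p : ℤ_[p]) ∣ z - 1 := by
  have hq_le : ‖q‖ ≤ 1 := by
    simpa using (IsUltrametricDist.norm_add_le_max 1 (-(1 - q))).trans
      (max_le norm_one.le (by rw [norm_neg]; exact hq.le))
  let z : ℤ_[p] := ⟨q, hq_le⟩
  refine ⟨z, rfl, (PadicInt.norm_lt_one_iff_dvd _).1 ?_⟩
  rw [PadicInt.norm_def, PadicInt.coe_sub, PadicInt.coe_one, norm_sub_rev]
  exact hq

lemma norm_one_sub_pow_lt_one (hq : ‖1 - q‖ < 1) (k : ℕ) : ‖1 - q ^ k‖ < 1 := by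
  obtain ⟨z, rfl, hz⟩ := exists_padicInt_dvd_sub_one hq
  have hzk : (p : ℤ_[p]) ∣ z ^ k - 1 := hz.trans (by simpa using sub_dvd_pow_sub_pow z 1 k)
  rw [← PadicInt.norm_lt_one_iff_dvd, PadicInt.norm_def] at hzk
  rw [norm_sub_rev]
  simpa using hzk

lemma one_add_pow_ne_zero (hp : Odd p) (hq : ‖1 - q‖ < 1) (k : ℕ) : 1 + q ^ k ≠ 0 := by
  intro h
  have h2 : ‖((2 : ℕ) : ℚ_[p])‖ < 1 := by
    simpa [show (2 : ℚ_[p]) = 1 - q ^ k by linear_combination h] using norm_one_sub_pow_lt_one hq k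
  have := (Nat.prime_dvd_prime_iff_eq Fact.out Nat.prime_two).1 (norm_natCast_lt_one_iff.1 h2)
  subst this
  exact Nat.not_even_iff_odd.2 hp even_two

lemma tendsto_pow_prime_pow_nhds_one (hq : ‖1 - q‖ < 1) :
    Tendsto (fun N : ℕ => q ^ p ^ N) atTop (nhds 1) := by
  obtain ⟨z, rfl, hz⟩ := exists_padicInt_dvd_sub_one hq
  have hbound : ∀ N, ‖(z : ℚ_[p]) ^ p ^ N - 1‖ ≤ ‖(p : ℤ_[p])‖ ^ (N + 1) := fun N => by
    obtain ⟨y, hy⟩ := dvd_sub_pow_of_dvd_sub hz N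
    rw [one_pow] at hy
    have : ‖(z : ℚ_[p]) ^ p ^ N - 1‖ = ‖z ^ p ^ N - 1‖ := by simp [PadicInt.norm_def]
    rw [this, hy, norm_mul, norm_pow]
    exact mul_le_of_le_one_right (by positivity) y.norm_le_one
  rw [← tendsto_sub_nhds_zero_iff]
  have hp_lt_one : ‖(p : ℤ_[p])‖ < 1 := (PadicInt.norm_lt_one_iff_dvd _).2 dvd_rfl
  exact squeeze_zero_norm hbound
    ((tendsto_pow_atTop_nhds_zero_of_lt_one (norm_nonneg _) hp_lt_one).comp
      (tendsto_add_atTop_nat 1))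

end Padic

section FermionicIntegral

variable {p : ℕ} [Fact p.Prime] {r : ℚ_[p]}

lemma fermionicIntegral.const_mul {g : ℕ → ℚ_[p]} {L : ℚ_[p]} (h : fermionicIntegral p r g L)
    (c : ℚ_[p]) : fermionicIntegral p r (fun x => c * g x) (c * L) := by
  refine (Tendsto.const_mul c h).congr fun N => ?_
  simp only [Finset.mul_sum, mul_assoc, mul_left_comm]

lemma fermionicIntegral.sum {ι : Type*} {s : Finset ι} {g : ι → ℕ → ℚ_[p]} {L : ι → ℚ_[p]}
    (h : ∀ i ∈ s, fermionicIntegral p r (g i) (L i)) :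
    fermionicIntegral p r (fun x => ∑ i ∈ s, g i x) (∑ i ∈ s, L i) := by
  refine (tendsto_finsetSum s h).congr fun N => ?_
  simp only [Finset.sum_mul, Finset.mul_sum]
  exact Finset.sum_comm

lemma fermionicIntegral_pow (hp : Odd p) {a : ℚ_[p]}
    (hr : Tendsto (fun N : ℕ => r ^ p ^ N) atTop (nhds 1))
    (ha : Tendsto (fun N : ℕ => a ^ p ^ N) atTop (nhds 1)) (har : 1 + a * r ≠ 0) :
    fermionicIntegral p r (fun x => a ^ x) ((1 + r) / (1 + a * r)) := by
  have hsum : ∀ N : ℕ, (1 + r) / (1 - (-r) ^ p ^ N) * ∑ x ∈ range (p ^ N), a ^ x * (-r) ^ x =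
      (1 + r) / (1 + r ^ p ^ N) * ((1 + a ^ p ^ N * r ^ p ^ N) / (1 + a * r)) := fun N => by
    have hodd : Odd (p ^ N) := hp.pow
    have hne : -(a * r) ≠ 1 := fun h => har (by linear_combination -h)
    have hne' : -(a * r) - 1 ≠ 0 := sub_ne_zero.2 hne
    rw [hodd.neg_pow, sub_neg_eq_add]
    congr 1
    simp only [← mul_pow, mul_neg]
    rw [geom_sum_eq hne, hodd.neg_pow, mul_pow, div_eq_div_iff hne' har]
    ring
  have hlim : (1 + r) / (1 + a * r) = (1 + r) / (1 + 1) * ((1 + 1 * 1) / (1 + a * r)) := by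
    field_simp
  refine Tendsto.congr (fun N => (hsum N).symm) ?_
  rw [hlim]
  exact (tendsto_const_nhds.div (tendsto_const_nhds.add hr) (by norm_num)).mul
    ((tendsto_const_nhds.add (ha.mul hr)).div_const _)

end FermionicIntegral

section EulerPolynomial

variable {p : ℕ} [Fact p.Prime] {q : ℚ_[p]}

lemma qnum_inv_one_sub (hq0 : q ≠ 0) (hq1 : q ≠ 1) (x : ℕ) :
    qnum q⁻¹ (1 - x) = (q - q ^ x) / (q - 1) := by
  have hq1' : q - 1 ≠ 0 := sub_ne_zero.2 hq1
  rw [qnum, inv_zpow', neg_sub, zpow_sub₀ hq0, zpow_natCast, zpow_one]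
  field_simp

lemma qnum_inv_one_sub_pow (hq0 : q ≠ 0) (hq1 : q ≠ 1) (n x : ℕ) :
    qnum q⁻¹ (1 - x) ^ n =
      ∑ l ∈ range (n + 1), (n.choose l : ℚ_[p]) * (-1) ^ l * q ^ (n - l) / (q - 1) ^ n *
        (q ^ l) ^ x := by
  rw [qnum_inv_one_sub hq0 hq1, div_pow, sub_eq_neg_add, add_pow, sum_div]
  refine sum_congr rfl fun l _ => ?_
  rw [neg_pow, ← pow_mul, ← pow_mul, mul_comm x l]
  ring

lemma sum_eq_xi_inv_two (hq0 : q ≠ 0) (hq1 : q ≠ 1) (hd : ∀ k : ℕ, 1 + q ^ k ≠ 0) (n : ℕ) :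
    ∑ l ∈ range (n + 1), (n.choose l : ℚ_[p]) * (-1) ^ l * q ^ (n - l) / (q - 1) ^ n *
      ((1 + q) / (1 + q ^ l * q)) = xi q⁻¹ n 2 := by
  rw [xi, mul_sum]
  refine sum_congr rfl fun l hl => ?_
  have hln : l ≤ n := Nat.lt_succ_iff.1 (mem_range.1 hl)
  have hq1' : q - 1 ≠ 0 := sub_ne_zero.2 hq1
  have hdl := hd (l + 1)
  obtain ⟨m, rfl⟩ := Nat.exists_eq_add_of_le hln
  have hzpow : q⁻¹ ^ ((l : ℤ) * 2) = (q ^ (2 * l))⁻¹ := by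
    rw [show (l : ℤ) * 2 = ((2 * l : ℕ) : ℤ) by push_cast; ring, zpow_natCast, inv_pow]
  have hinv : 1 + q⁻¹ ^ (l + 1) = (1 + q ^ (l + 1)) / q ^ (l + 1) := by
    rw [inv_pow]
    field_simp
    ring
  have hminus : 1 - q⁻¹ = (q - 1) / q := by
    field_simp
  rw [Nat.add_sub_cancel_left, ← pow_succ, hzpow, hinv, hminus, div_pow]
  field_simp
  ring

end EulerPolynomial

theorem stmt6 (p : ℕ) [Fact p.Prime] (hp : Odd p) (q : ℚ_[p]) (hq : ‖1 - q‖ < 1) (hq1 : q ≠ 1) (n : ℕ) :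
    fermionicIntegral p q (fun x => (qnum q⁻¹ (1 - x)) ^ n) (xi q⁻¹ n 2) := by
  have hq0 : q ≠ 0 := by rintro rfl; simp at hq
  have hd := Padic.one_add_pow_ne_zero hp hq
  have hpow := Padic.tendsto_pow_prime_pow_nhds_one hq
  have hint := fermionicIntegral.sum (s := range (n + 1)) fun l _ =>
    (fermionicIntegral_pow hp hpow (by simpa only [pow_right_comm, one_pow] using hpow.pow l)
      (by rw [← pow_succ]; exact hd (l + 1))).const_mul
      ((n.choose l : ℚ_[p]) * (-1) ^ l * q ^ (n - l) / (q - 1) ^ n)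
  rw [sum_eq_xi_inv_two hq0 hq1 hd] at hint
  simpa only [qnum_inv_one_sub_pow hq0 hq1] using hint
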